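/- arXiv:2506.01509 — 5 statements merged into one kernel-verified Lean document; each statement's English description precedes it below -/
import Mathlib

section
/- Every extreme point of the feasible region P_k of the multistage assignment game linear program has all coordinates integral. -/
/-!
Extremality first forces the deviations to be as small as the allocations allow,
`δ^i = (y^i - y^{i+1})⁺` and `d^i = (y^{i+1} - y^i)⁺`, so it suffices that every `y^i_v` is an
integer. If one is not, pick a fractional level `φ ∈ (0, 1)` that occurs, and move every value
`y^i_v` with `v ∈ V_s` and fractional part `φ` up, and every value with `v ∈ V_t` and fractional
part `1 - φ` down, all by the same small `t`. A tight edge joins exactly such a pair, equal values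
at consecutive stages move together, and by complementary slackness a maximum matching of `G_i`
pairs the moved vertices of each stage, so the sums `ν(G_i)` are preserved; meanwhile the tight
deviations move linearly in `t`. Thus `p ± t • w ∈ P_k` for a nonzero `w`, contradicting
extremality.
-/

/-- A finite graph: a finite vertex set and a finite set of (oriented representatives of) edges. -/
structure FinGraph (α : Type*) where
  verts : Finset α
  edges : Finset (α × α)

namespace FinGraph

variable {α : Type*}

/-- A matching: a set of edges of `G` that are pairwise vertex-disjoint. -/
def IsMatching (G : FinGraph α) (M : Finset (α × α)) : Prop :=
  M ⊆ G.edges ∧ ∀ e ∈ M, ∀ f ∈ M, e ≠ f →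
    e.1 ≠ f.1 ∧ e.1 ≠ f.2 ∧ e.2 ≠ f.1 ∧ e.2 ≠ f.2

open Classical in
/-- `ν(G)`: the maximum cardinality of a matching of `G`. -/
noncomputable def nu (G : FinGraph α) : ℕ :=
  (G.edges.powerset.filter fun M => G.IsMatching M).sup Finset.card

/-- Well-formedness: edges join two distinct vertices of the graph. -/
def WF (G : FinGraph α) : Prop :=
  ∀ e ∈ G.edges, e.1 ∈ G.verts ∧ e.2 ∈ G.verts ∧ e.1 ≠ e.2

/-- `G` is bipartite with parts `V1`, `V2` (edges oriented from `V1` to `V2`). -/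
def Bipartition [DecidableEq α] (G : FinGraph α) (V1 V2 : Finset α) : Prop :=
  G.verts ⊆ V1 ∪ V2 ∧ ∀ e ∈ G.edges, e.1 ∈ V1 ∧ e.2 ∈ V2

/-- The core of the assignment game on `G`: minimum fractional vertex covers of value `ν(G)`. -/
noncomputable def core (G : FinGraph α) : Set (α → ℝ) :=
  {y | (∀ v ∈ G.verts, 0 ≤ y v) ∧ (∀ e ∈ G.edges, 1 ≤ y e.1 + y e.2) ∧
    ∑ v ∈ G.verts, y v = (G.nu : ℝ)}

/-- The subgraph of `G` induced by the vertex set `U`. -/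
def induce [DecidableEq α] (G : FinGraph α) (U : Finset α) : FinGraph α :=
  ⟨G.verts ∩ U, G.edges.filter fun e => e.1 ∈ U ∧ e.2 ∈ U⟩

end FinGraph

/-- A real number is integral if it is an integer. -/
def IntegralReal (x : ℝ) : Prop := ∃ n : ℤ, x = (n : ℝ)

open FinGraph

variable {α : Type*}

/-- A point of the multistage LP: stage allocations `y^i` (`i = 0, …, k-1`, zero-based) and
deviation variables `δ^i`, `d^i` (`i = 0, …, k-2`) linking consecutive stages. -/
abbrev MultiStagePt (α : Type*) : Type _ :=
  (ℕ → α → ℝ) × (ℕ → α → ℝ) × (ℕ → α → ℝ)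

/-- The relaxed feasible region `D_k` of the multistage LP (no matching-number equalities). -/
def regionDk [DecidableEq α] (k : ℕ) (G : ℕ → FinGraph α) :
    Set (MultiStagePt α) :=
  {p | (∀ i < k, (∀ v ∈ (G i).verts, 0 ≤ p.1 i v) ∧
         (∀ e ∈ (G i).edges, 1 ≤ p.1 i e.1 + p.1 i e.2)) ∧
       (∀ i, i + 1 < k → ∀ v ∈ (G i).verts ∩ (G (i + 1)).verts,
         p.1 i v - p.1 (i + 1) v ≤ p.2.1 i v ∧
         p.1 (i + 1) v - p.1 i v ≤ p.2.2 i v ∧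
         0 ≤ p.2.1 i v ∧ 0 ≤ p.2.2 i v)}

/-- The feasible region `P_k` of the multistage LP: `D_k` together with the matching-number
equalities. -/
noncomputable def regionPk [DecidableEq α] (k : ℕ) (G : ℕ → FinGraph α) :
    Set (MultiStagePt α) :=
  {p ∈ regionDk k G | ∀ i < k, ∑ v ∈ (G i).verts, p.1 i v = ((G i).nu : ℝ)}

/-- The multistage dual-flow polyhedron `Q_k`: points of `D_k` extended by potentials `γ^i`. -/
def regionQk [DecidableEq α] (k : ℕ) (G : ℕ → FinGraph α) (Vs Vt : Finset α) :
    Set (MultiStagePt α × (ℕ → α → ℝ)) :=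
  {q | (∀ i < k, ∀ v ∈ (G i).verts ∩ Vs, 1 ≤ q.2 i v + q.1.1 i v) ∧
       (∀ i, i + 1 < k → ∀ v ∈ ((G i).verts ∩ (G (i + 1)).verts) ∩ Vs,
          0 ≤ q.2 i v - q.2 (i + 1) v + q.1.2.1 i v ∧
          0 ≤ q.2 (i + 1) v - q.2 i v + q.1.2.2 i v) ∧
       (∀ i < k, ∀ e ∈ (G i).edges, e.1 ∈ Vs → e.2 ∈ Vt →
          0 ≤ q.2 i e.2 - q.2 i e.1) ∧
       (∀ i < k, ∀ v ∈ (G i).verts ∩ Vt, 0 ≤ q.1.1 i v - q.2 i v) ∧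
       (∀ i, i + 1 < k → ∀ v ∈ ((G i).verts ∩ (G (i + 1)).verts) ∩ Vt,
          0 ≤ q.2 (i + 1) v - q.2 i v + q.1.2.1 i v ∧
          0 ≤ q.2 i v - q.2 (i + 1) v + q.1.2.2 i v) ∧
       (∀ i < k, ∀ v ∈ (G i).verts, 0 ≤ q.1.1 i v) ∧
       (∀ i, i + 1 < k → ∀ v ∈ (G i).verts ∩ (G (i + 1)).verts,
          0 ≤ q.1.2.1 i v ∧ 0 ≤ q.1.2.2 i v)}

/-- A linear objective on the multistage variables `(y^i, δ^i, d^i)`, with coefficient functions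
`cy`, `cδ`, `cd`. -/
def objCk [DecidableEq α] (k : ℕ) (G : ℕ → FinGraph α)
    (cy cδ cd : ℕ → α → ℝ) (p : MultiStagePt α) : ℝ :=
  ∑ i ∈ Finset.range k, ∑ v ∈ (G i).verts, cy i v * p.1 i v
    + ∑ i ∈ Finset.range (k - 1), ∑ v ∈ (G i).verts ∩ (G (i + 1)).verts,
        (cδ i v * p.2.1 i v + cd i v * p.2.2 i v)

/-- The feasible region of the multistage LP, embedded in the ambient product space by requiring
all variables to vanish outside their index sets (`y^i ∈ ℝ^{V_i}` for `i < k`,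
`δ^i, d^i ∈ ℝ^{V_i ∩ V_{i+1}}` for `i + 1 < k`). -/
noncomputable def regionPkEmb [DecidableEq α] (k : ℕ) (G : ℕ → FinGraph α) :
    Set (MultiStagePt α) :=
  {p ∈ regionPk k G |
    (∀ i v, ¬(i < k ∧ v ∈ (G i).verts) → p.1 i v = 0) ∧
    (∀ i v, ¬(i + 1 < k ∧ v ∈ (G i).verts ∩ (G (i + 1)).verts) →
        p.2.1 i v = 0 ∧ p.2.2 i v = 0)}


open Filter Topology Finset

theorem eq_zero_of_mem_extremePoints_of_add_mem_of_sub_mem {𝕜 E : Type*} [Ring 𝕜]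
    [LinearOrder 𝕜] [IsStrictOrderedRing 𝕜] [Invertible (2 : 𝕜)] [AddCommGroup E] [Module 𝕜 E]
    {A : Set E} {x z : E} (hx : x ∈ A.extremePoints 𝕜) (h₁ : x + z ∈ A) (h₂ : x - z ∈ A) :
    z = 0 :=
  add_eq_left.mp (hx.2 h₁ h₂ (mem_openSegment_add_sub x z))

theorem eq_zero_of_mem_extremePoints_of_eventually_add_smul_mem {E : Type*} [AddCommGroup E]
    [Module ℝ E] {A : Set E} {x z : E} (hx : x ∈ A.extremePoints ℝ)
    (h : ∀ᶠ t in 𝓝 (0 : ℝ), x + t • z ∈ A) : z = 0 := by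
  have hneg : ∀ᶠ t in 𝓝 (0 : ℝ), x + (-t) • z ∈ A :=
    (continuous_neg.tendsto' (0 : ℝ) 0 neg_zero).eventually h
  obtain ⟨t, ⟨h₁, h₂⟩, ht⟩ := (((h.and hneg).filter_mono nhdsWithin_le_nhds).and
    (self_mem_nhdsWithin (s := Set.Ioi 0))).exists
  rw [neg_smul, ← sub_eq_add_neg] at h₂
  exact (smul_eq_zero.mp (eq_zero_of_mem_extremePoints_of_add_mem_of_sub_mem hx h₁ h₂)).resolve_left
    ht.ne'

theorem tendsto_add_mul_nhds_zero (a c : ℝ) :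
    Tendsto (fun t : ℝ => a + t * c) (𝓝 0) (𝓝 a) := by
  have : Continuous fun t : ℝ => a + t * c := by fun_prop
  simpa using this.tendsto 0

theorem eventually_le_add_mul {a b c : ℝ} (hab : a ≤ b) (hc : a = b → c = 0) :
    ∀ᶠ t in 𝓝 (0 : ℝ), a ≤ b + t * c := by
  rcases hab.eq_or_lt with rfl | hlt
  · simp [hc rfl]
  · exact ((tendsto_add_mul_nhds_zero b c).eventually (lt_mem_nhds hlt)).mono fun _ h => h.le

theorem eventually_max_add_mul_zero {a c : ℝ} (hc : a = 0 → c = 0) :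
    ∀ᶠ t in 𝓝 (0 : ℝ), max (a + t * c) 0 = max a 0 + t * (if 0 < a then c else 0) := by
  rcases lt_trichotomy a 0 with ha | rfl | ha
  · filter_upwards [(tendsto_add_mul_nhds_zero a c).eventually (gt_mem_nhds ha)] with t ht
    simp [ht.le, ha.le, not_lt.2 ha.le]
  · simp [hc rfl]
  · filter_upwards [(tendsto_add_mul_nhds_zero a c).eventually (lt_mem_nhds ha)] with t ht
    simp [ht.le, ha.le, ha]

theorem Int.fract_eq_iff_fract_eq_one_sub {R : Type*} [Ring R] [LinearOrder R]
    [IsStrictOrderedRing R] [FloorRing R] {a b φ : R} (hab : a + b = 1) (hφ₀ : 0 < φ)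
    (hφ₁ : φ < 1) : Int.fract a = φ ↔ Int.fract b = 1 - φ := by
  rw [eq_sub_of_add_eq' hab, sub_eq_neg_add, Int.fract_add_one]
  by_cases ha : Int.fract a = 0
  · rw [ha, Int.fract_neg_eq_zero.2 ha]
    exact iff_of_false hφ₀.ne (sub_pos.2 hφ₁).ne
  · rw [Int.fract_neg ha, sub_right_inj]

section LevelDir

variable [DecidableEq α] (Vs : Finset α)

noncomputable def levelDir (φ : ℝ) (v : α) (x : ℝ) : ℝ :=
  if v ∈ Vs then (if Int.fract x = φ then 1 else 0) else (if Int.fract x = 1 - φ then -1 else 0)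

theorem levelDir_zero {φ : ℝ} (hφ₀ : 0 < φ) (hφ₁ : φ < 1) (v : α) :
    levelDir Vs φ v 0 = 0 := by
  simp [levelDir, hφ₀.ne, (sub_pos.2 hφ₁).ne]

theorem levelDir_add_eq_zero {φ x x' : ℝ} {u v : α} (hφ₀ : 0 < φ) (hφ₁ : φ < 1)
    (hu : u ∈ Vs) (hv : v ∉ Vs) (hx : x + x' = 1) :
    levelDir Vs φ u x + levelDir Vs φ v x' = 0 := by
  simp only [levelDir, if_pos hu, if_neg hv, Int.fract_eq_iff_fract_eq_one_sub hx hφ₀ hφ₁]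
  split_ifs <;> norm_num

theorem levelDir_ne_zero (v : α) (x : ℝ) :
    levelDir Vs (if v ∈ Vs then Int.fract x else 1 - Int.fract x) v x ≠ 0 := by
  by_cases hv : v ∈ Vs <;> simp [levelDir, hv]

end LevelDir

namespace FinGraph

def matchedVerts [DecidableEq α] (M : Finset (α × α)) : Finset α :=
  M.biUnion fun e => {e.1, e.2}

variable [DecidableEq α] {G : FinGraph α} {M : Finset (α × α)}

theorem matchedVerts_subset (hwf : G.WF) (hM : M ⊆ G.edges) : matchedVerts M ⊆ G.verts := by
  intro v hv
  simp only [matchedVerts, mem_biUnion, mem_insert, mem_singleton] at hv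
  obtain ⟨e, he, rfl | rfl⟩ := hv
  exacts [(hwf e (hM he)).1, (hwf e (hM he)).2.1]

theorem IsMatching.sum_matchedVerts {β : Type*} [AddCommMonoid β] (hwf : G.WF)
    (hM : G.IsMatching M) (f : α → β) :
    ∑ v ∈ matchedVerts M, f v = ∑ e ∈ M, (f e.1 + f e.2) := by
  rw [matchedVerts, sum_biUnion]
  · exact sum_congr rfl fun e he => sum_pair (hwf e (hM.1 he)).2.2
  · intro e he e' he' hne
    obtain ⟨h₁, h₂, h₃, h₄⟩ := hM.2 e he e' he' hne
    simp [disjoint_left, h₁, h₂, h₃, h₄]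

theorem exists_isMatching_card_eq_nu (G : FinGraph α) :
    ∃ M, G.IsMatching M ∧ M.card = G.nu := by
  classical
  obtain ⟨M, hM, hcard⟩ := exists_mem_eq_sup
    (G.edges.powerset.filter fun M => G.IsMatching M) ⟨∅, by simp [IsMatching]⟩ card
  exact ⟨M, (mem_filter.1 hM).2, hcard.symm⟩

/-- Complementary slackness between a maximum matching and a minimum fractional vertex cover. -/
theorem exists_isMatching_tight (hwf : G.WF) {y : α → ℝ} (hy : y ∈ G.core) :
    ∃ M, G.IsMatching M ∧ (∀ e ∈ M, y e.1 + y e.2 = 1) ∧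
      ∀ v ∈ G.verts, v ∉ matchedVerts M → y v = 0 := by
  obtain ⟨hy₀, hy₁, hysum⟩ := hy
  obtain ⟨M, hM, hcard⟩ := G.exists_isMatching_card_eq_nu
  have hsub := matchedVerts_subset hwf hM.1
  have hedges : ∑ e ∈ M, (1 : ℝ) ≤ ∑ e ∈ M, (y e.1 + y e.2) :=
    sum_le_sum fun e he => hy₁ e (hM.1 he)
  have hverts : ∑ e ∈ M, (y e.1 + y e.2) ≤ ∑ v ∈ G.verts, y v := by
    rw [← hM.sum_matchedVerts hwf]
    exact sum_le_sum_of_subset_of_nonneg hsub fun v hv _ => hy₀ v hv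
  have hnu : ∑ e ∈ M, (1 : ℝ) = ∑ v ∈ G.verts, y v := by simp [hcard, hysum]
  refine ⟨M, hM, fun e he => ?_, fun v hv hvM => ?_⟩
  · exact ((sum_eq_sum_iff_of_le fun e he => hy₁ e (hM.1 he)).1 (by linarith) e he).symm
  · by_contra hne
    have := sum_lt_sum_of_subset hsub hv hvM (lt_of_le_of_ne (hy₀ v hv) (Ne.symm hne))
      fun u hu _ => hy₀ u hu
    rw [hM.sum_matchedVerts hwf] at this
    linarith

theorem sum_eq_zero_of_tight (hwf : G.WF) {y z : α → ℝ} (hy : y ∈ G.core)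
    (hz₀ : ∀ v ∈ G.verts, y v = 0 → z v = 0)
    (hz₁ : ∀ e ∈ G.edges, y e.1 + y e.2 = 1 → z e.1 + z e.2 = 0) :
    ∑ v ∈ G.verts, z v = 0 := by
  obtain ⟨M, hM, htight, hfree⟩ := exists_isMatching_tight hwf hy
  rw [← sum_subset (matchedVerts_subset hwf hM.1) fun v hv hvM => hz₀ v hv (hfree v hv hvM),
    hM.sum_matchedVerts hwf]
  exact sum_eq_zero fun e he => hz₁ e (hM.1 he) (htight e he)

theorem eventually_add_smul_mem_core (hwf : G.WF) {y z : α → ℝ} (hy : y ∈ G.core)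
    (hz₀ : ∀ v ∈ G.verts, y v = 0 → z v = 0)
    (hz₁ : ∀ e ∈ G.edges, y e.1 + y e.2 = 1 → z e.1 + z e.2 = 0) :
    ∀ᶠ t in 𝓝 (0 : ℝ), y + t • z ∈ G.core := by
  have hnonneg : ∀ᶠ t in 𝓝 (0 : ℝ), ∀ v ∈ G.verts, 0 ≤ y v + t * z v :=
    (eventually_all_finset _).2 fun v hv =>
      eventually_le_add_mul (hy.1 v hv) fun h => hz₀ v hv h.symm
  have hcover : ∀ᶠ t in 𝓝 (0 : ℝ), ∀ e ∈ G.edges,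
      1 ≤ (y e.1 + y e.2) + t * (z e.1 + z e.2) :=
    (eventually_all_finset _).2 fun e he =>
      eventually_le_add_mul (hy.2.1 e he) fun h => hz₁ e he h.symm
  filter_upwards [hnonneg, hcover] with t h₀ h₁
  simp only [core, Set.mem_ofPred_eq, Pi.add_apply, Pi.smul_apply, smul_eq_mul]
  refine ⟨h₀, fun e he => by linarith [h₁ e he], ?_⟩
  rw [sum_add_distrib, ← mul_sum, sum_eq_zero_of_tight hwf hy hz₀ hz₁, mul_zero, add_zero, hy.2.2]

end FinGraph

abbrev IsLink [DecidableEq α] (k : ℕ) (G : ℕ → FinGraph α) (i : ℕ) (v : α) : Prop :=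
  i + 1 < k ∧ v ∈ (G i).verts ∩ (G (i + 1)).verts

def IsCoreProfile (k : ℕ) (G : ℕ → FinGraph α) (y : ℕ → α → ℝ) : Prop :=
  (∀ i < k, y i ∈ (G i).core) ∧ ∀ i v, ¬(i < k ∧ v ∈ (G i).verts) → y i v = 0

noncomputable def tightDev [DecidableEq α] (k : ℕ) (G : ℕ → FinGraph α) (y : ℕ → α → ℝ) :
    MultiStagePt α :=
  (y, fun i v => if IsLink k G i v then max (y i v - y (i + 1) v) 0 else 0,
    fun i v => if IsLink k G i v then max (y (i + 1) v - y i v) 0 else 0)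

section MultiStage

variable [DecidableEq α] {k : ℕ} {G : ℕ → FinGraph α}

theorem mem_regionPkEmb_iff {p : MultiStagePt α} :
    p ∈ regionPkEmb k G ↔ IsCoreProfile k G p.1 ∧
      (∀ i v, IsLink k G i v →
        p.1 i v - p.1 (i + 1) v ≤ p.2.1 i v ∧ p.1 (i + 1) v - p.1 i v ≤ p.2.2 i v ∧
          0 ≤ p.2.1 i v ∧ 0 ≤ p.2.2 i v) ∧
      ∀ i v, ¬IsLink k G i v → p.2.1 i v = 0 ∧ p.2.2 i v = 0 := by
  simp only [regionPkEmb, regionPk, regionDk, IsCoreProfile, core, Set.mem_ofPred_eq]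
  constructor
  · rintro ⟨⟨⟨hcov, hlink⟩, hsum⟩, hy₀, hoff⟩
    exact ⟨⟨fun i hi => ⟨(hcov i hi).1, (hcov i hi).2, hsum i hi⟩, hy₀⟩,
      fun i v h => hlink i h.1 v h.2, hoff⟩
  · rintro ⟨⟨hcore, hy₀⟩, hlink, hoff⟩
    exact ⟨⟨⟨fun i hi => ⟨(hcore i hi).1, (hcore i hi).2.1⟩,
      fun i hi v hv => hlink i v ⟨hi, hv⟩⟩, fun i hi => (hcore i hi).2.2⟩, hy₀, hoff⟩

theorem tightDev_mem_regionPkEmb {y : ℕ → α → ℝ} (hy : IsCoreProfile k G y) :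
    tightDev k G y ∈ regionPkEmb k G := by
  refine mem_regionPkEmb_iff.2 ⟨hy, fun i v hiv => ?_, fun i v hiv => ?_⟩
  · simp only [tightDev, if_pos hiv]
    exact ⟨le_max_left _ _, le_max_left _ _, le_max_right _ _, le_max_right _ _⟩
  · simp only [tightDev, if_neg hiv, and_self]

theorem eq_tightDev_of_mem_extremePoints {p : MultiStagePt α}
    (hp : p ∈ (regionPkEmb k G).extremePoints ℝ) : p = tightDev k G p.1 := by
  obtain ⟨hy, hlink, hoff⟩ := mem_regionPkEmb_iff.1 hp.1
  -- `p` is the midpoint of `tightDev k G p.1` and its reflection through `p`, which is feasible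
  -- because it only raises the deviations of `p`.
  have hrefl : p + (p - tightDev k G p.1) ∈ regionPkEmb k G := by
    refine mem_regionPkEmb_iff.2
      ⟨by simpa [tightDev] using hy, fun i v hiv => ?_, fun i v hiv => ?_⟩
    · obtain ⟨h₁, h₂, h₃, h₄⟩ := hlink i v hiv
      simp only [tightDev, Prod.fst_add, Prod.snd_add, Prod.fst_sub, Prod.snd_sub, Pi.add_apply,
        Pi.sub_apply, if_pos hiv]
      have := max_le h₁ h₃
      have := max_le h₂ h₄
      exact ⟨by linarith, by linarith, by linarith, by linarith⟩
    · simp [tightDev, hiv, hoff i v hiv]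
  have hsub : p - (p - tightDev k G p.1) ∈ regionPkEmb k G := by
    rw [sub_sub_cancel]
    exact tightDev_mem_regionPkEmb hy
  exact (sub_eq_zero.1 (eq_zero_of_mem_extremePoints_of_add_mem_of_sub_mem hp hrefl hsub))

theorem eventually_isCoreProfile_add_smul {y z : ℕ → α → ℝ} (hWF : ∀ i < k, (G i).WF)
    (hy : IsCoreProfile k G y) (hz₀ : ∀ i v, y i v = 0 → z i v = 0)
    (hz₁ : ∀ i < k, ∀ e ∈ (G i).edges, y i e.1 + y i e.2 = 1 → z i e.1 + z i e.2 = 0) :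
    ∀ᶠ t in 𝓝 (0 : ℝ), IsCoreProfile k G (y + t • z) := by
  have hstage : ∀ᶠ t in 𝓝 (0 : ℝ), ∀ i ∈ range k, y i + t • z i ∈ (G i).core :=
    (eventually_all_finset _).2 fun i hi =>
      FinGraph.eventually_add_smul_mem_core (hWF i (mem_range.1 hi)) (hy.1 i (mem_range.1 hi))
        (fun v _ => hz₀ i v) (hz₁ i (mem_range.1 hi))
  filter_upwards [hstage] with t ht
  exact ⟨fun i hi => ht i (mem_range.2 hi),
    fun i v hiv => by simp [hy.2 i v hiv, hz₀ i v (hy.2 i v hiv)]⟩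

theorem exists_eventually_tightDev_add_smul (y z : ℕ → α → ℝ)
    (hz : ∀ i v, y i v = y (i + 1) v → z i v = z (i + 1) v) :
    ∃ w : MultiStagePt α, w.1 = z ∧
      ∀ᶠ t in 𝓝 (0 : ℝ), tightDev k G (y + t • z) = tightDev k G y + t • w := by
  refine ⟨(z, fun i v => if IsLink k G i v then
      (if 0 < y i v - y (i + 1) v then z i v - z (i + 1) v else 0) else 0,
    fun i v => if IsLink k G i v then
      (if 0 < y (i + 1) v - y i v then z (i + 1) v - z i v else 0) else 0), rfl, ?_⟩
  have hev : ∀ᶠ t in 𝓝 (0 : ℝ), ∀ i ∈ range k, ∀ v ∈ (G i).verts ∩ (G (i + 1)).verts,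
      max (y i v - y (i + 1) v + t * (z i v - z (i + 1) v)) 0 =
          max (y i v - y (i + 1) v) 0 +
            t * (if 0 < y i v - y (i + 1) v then z i v - z (i + 1) v else 0) ∧
      max (y (i + 1) v - y i v + t * (z (i + 1) v - z i v)) 0 =
          max (y (i + 1) v - y i v) 0 +
            t * (if 0 < y (i + 1) v - y i v then z (i + 1) v - z i v else 0) :=
    (eventually_all_finset _).2 fun i _ => (eventually_all_finset _).2 fun v _ =>
      (eventually_max_add_mul_zero fun h => by rw [hz i v (by linarith)]; ring).and
        (eventually_max_add_mul_zero fun h => by rw [hz i v (by linarith)]; ring)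
  filter_upwards [hev] with t ht
  refine Prod.ext rfl (Prod.ext (funext fun i => funext fun v => ?_)
    (funext fun i => funext fun v => ?_)) <;> by_cases hiv : IsLink k G i v
  · simp only [tightDev, Prod.fst_add, Prod.snd_add, Prod.smul_fst, Prod.smul_snd, Pi.add_apply,
      Pi.smul_apply, smul_eq_mul, if_pos hiv]
    convert (ht i (mem_range.2 (by omega)) v hiv.2).1 using 2
    ring
  · simp [tightDev, hiv]
  · simp only [tightDev, Prod.snd_add, Prod.smul_snd, Pi.add_apply, Pi.smul_apply, smul_eq_mul,
      if_pos hiv]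
    convert (ht i (mem_range.2 (by omega)) v hiv.2).2 using 2
    ring
  · simp [tightDev, hiv]

theorem integralReal_tightDev {y : ℕ → α → ℝ} (hy : ∀ i v, IntegralReal (y i v))
    (i : ℕ) (v : α) :
    IntegralReal ((tightDev k G y).2.1 i v) ∧ IntegralReal ((tightDev k G y).2.2 i v) := by
  obtain ⟨m, hm⟩ := hy i v
  obtain ⟨n, hn⟩ := hy (i + 1) v
  by_cases hiv : IsLink k G i v
  · simp only [tightDev, if_pos hiv, hm, hn]
    exact ⟨⟨max (m - n) 0, by push_cast; rfl⟩, ⟨max (n - m) 0, by push_cast; rfl⟩⟩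
  · simp only [tightDev, if_neg hiv]
    exact ⟨⟨0, by simp⟩, ⟨0, by simp⟩⟩

theorem integralReal_of_mem_extremePoints {Vs Vt : Finset α} (hdisj : Disjoint Vs Vt)
    (hWF : ∀ i < k, (G i).WF) (hbip : ∀ i < k, (G i).Bipartition Vs Vt) {p : MultiStagePt α}
    (hp : p ∈ (regionPkEmb k G).extremePoints ℝ) (i : ℕ) (v : α) : IntegralReal (p.1 i v) := by
  by_contra hfrac
  have hpt := eq_tightDev_of_mem_extremePoints hp
  obtain ⟨hy, -, -⟩ := mem_regionPkEmb_iff.1 hp.1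
  have hfract : Int.fract (p.1 i v) ≠ 0 := fun h =>
    hfrac <| (Int.fract_eq_zero_iff.1 h).imp fun _ hn => hn.symm
  set φ := if v ∈ Vs then Int.fract (p.1 i v) else 1 - Int.fract (p.1 i v) with hφ
  have hφ₀₁ : 0 < φ ∧ φ < 1 := by
    have hpos := lt_of_le_of_ne (Int.fract_nonneg (p.1 i v)) hfract.symm
    have hlt := Int.fract_lt_one (p.1 i v)
    rw [hφ]
    split_ifs <;> constructor <;> linarith
  set z : ℕ → α → ℝ := fun j u => levelDir Vs φ u (p.1 j u) with hz
  have hz₀ : ∀ j u, p.1 j u = 0 → z j u = 0 := fun j u h => by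
    simp only [hz, h, levelDir_zero Vs hφ₀₁.1 hφ₀₁.2]
  have hz₁ : ∀ j < k, ∀ e ∈ (G j).edges,
      p.1 j e.1 + p.1 j e.2 = 1 → z j e.1 + z j e.2 = 0 :=
    fun j hj e he h => levelDir_add_eq_zero Vs hφ₀₁.1 hφ₀₁.2 ((hbip j hj).2 e he).1
      (disjoint_right.1 hdisj ((hbip j hj).2 e he).2) h
  obtain ⟨w, hwz, hw⟩ := exists_eventually_tightDev_add_smul (k := k) (G := G) p.1 z
    fun j u h => by simp only [hz, h]
  have hw₀ : w = 0 := by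
    refine eq_zero_of_mem_extremePoints_of_eventually_add_smul_mem hp ?_
    filter_upwards [eventually_isCoreProfile_add_smul hWF hy hz₀ hz₁, hw] with t ht htw
    rw [← hpt] at htw
    rw [← htw]
    exact tightDev_mem_regionPkEmb ht
  have : z i v = 0 := by rw [← hwz, hw₀]; rfl
  exact levelDir_ne_zero Vs v (p.1 i v) this

end MultiStage

theorem extremePoints_regionPk_integral_general [DecidableEq α]
    (k : ℕ) (G : ℕ → FinGraph α) (Vs Vt : Finset α)
    (hdisj : Disjoint Vs Vt)
    (hWF : ∀ i < k, (G i).WF) (hbip : ∀ i < k, (G i).Bipartition Vs Vt)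
    (p : MultiStagePt α)
    (hp : p ∈ Set.extremePoints ℝ (regionPkEmb k G)) :
    (∀ i v, IntegralReal (p.1 i v)) ∧ (∀ i v, IntegralReal (p.2.1 i v)) ∧
    (∀ i v, IntegralReal (p.2.2 i v)) := by
  have hy := integralReal_of_mem_extremePoints hdisj hWF hbip hp
  have hpt := eq_tightDev_of_mem_extremePoints hp
  refine ⟨hy, fun i v => ?_, fun i v => ?_⟩ <;> rw [hpt]
  exacts [(integralReal_tightDev hy i v).1, (integralReal_tightDev hy i v).2]

/-- Every extreme point of the feasible region `P_k` of the multistage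
assignment game LP has all coordinates integral. -/
theorem extremePoints_regionPk_integral [DecidableEq α]
    (k : ℕ) (hk : 1 ≤ k) (G : ℕ → FinGraph α) (Vs Vt : Finset α)
    (hdisj : Disjoint Vs Vt)
    (hWF : ∀ i < k, (G i).WF) (hbip : ∀ i < k, (G i).Bipartition Vs Vt)
    (p : MultiStagePt α)
    (hp : p ∈ Set.extremePoints ℝ (regionPkEmb k G)) :
    (∀ i v, IntegralReal (p.1 i v)) ∧ (∀ i v, IntegralReal (p.2.1 i v)) ∧
    (∀ i v, IntegralReal (p.2.2 i v)) :=
  extremePoints_regionPk_integral_general k G Vs Vt hdisj hWF hbip p hp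
end

section
/- Every feasible solution of the relaxed multistage region D_k extends to a feasible solution of the multistage dual-flow polyhedron Q_k: if ((y^i), (δ^i), (d^i)) ∈ D_k and one defines γ^i_v = 1 − y^i_v for v ∈ V_i∩V_s and γ^i_v = y^i_v for v ∈ V_i∩V_t, then ((y^i), (δ^i), (d^i), (γ^i)) ∈ Q_k. -/
open FinGraph

variable {α : Type*}

/-! With `γ = 1 - y` on `V_s` and `γ = y` on `V_t`, every constraint of `Q_k` becomes a
constraint of `D_k`. An edge `uv` gives `γ_v - γ_u = y_u + y_v - 1 ≥ 0`, and across stages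
the differences `γ^i_v - γ^{i+1}_v` are `±(y^i_v - y^{i+1}_v)`, the sign flipping on `V_s`,
so they are bounded by `δ^i_v` and `d^i_v`. -/

section FlowPotential

variable [DecidableEq α] {Vs Vt : Finset α} {y : ℕ → α → ℝ} {i j : ℕ} {u v : α}

/-- The potentials `γ^i` of the dual-flow polyhedron induced by the stage allocations `y^i`. -/
def flowPotential (Vs : Finset α) (y : ℕ → α → ℝ) (i : ℕ) (v : α) : ℝ :=
  if v ∈ Vs then 1 - y i v else y i v

theorem flowPotential_add_self_of_mem (hv : v ∈ Vs) : flowPotential Vs y i v + y i v = 1 := by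
  simp [flowPotential, hv]

theorem flowPotential_of_mem_right (hdisj : Disjoint Vs Vt) (hv : v ∈ Vt) :
    flowPotential Vs y i v = y i v := by
  simp [flowPotential, Finset.disjoint_right.mp hdisj hv]

theorem flowPotential_sub_of_mem (hv : v ∈ Vs) :
    flowPotential Vs y i v - flowPotential Vs y j v = y j v - y i v := by
  simp only [flowPotential, hv, if_true]
  ring

theorem flowPotential_sub_of_mem_right (hdisj : Disjoint Vs Vt) (hv : v ∈ Vt) :
    flowPotential Vs y i v - flowPotential Vs y j v = y i v - y j v := by
  rw [flowPotential_of_mem_right hdisj hv, flowPotential_of_mem_right hdisj hv]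

theorem flowPotential_sub_of_mem_of_mem_right (hdisj : Disjoint Vs Vt) (hu : u ∈ Vs)
    (hv : v ∈ Vt) :
    flowPotential Vs y i v - flowPotential Vs y i u = y i u + y i v - 1 := by
  rw [flowPotential_of_mem_right hdisj hv, ← flowPotential_add_self_of_mem (y := y) (i := i) hu]
  ring

end FlowPotential

theorem regionDk_extends_to_regionQk_general [DecidableEq α]
    (k : ℕ) (G : ℕ → FinGraph α) (Vs Vt : Finset α)
    (hdisj : Disjoint Vs Vt)
    (p : MultiStagePt α) (hp : p ∈ regionDk k G) :
    (p, fun i v => if v ∈ Vs then 1 - p.1 i v else p.1 i v) ∈ regionQk k G Vs Vt := by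
  obtain ⟨hcover, hlink⟩ := hp
  change (p, flowPotential Vs p.1) ∈ regionQk k G Vs Vt
  refine ⟨?source, ?sourceLink, ?edge, ?sink, ?sinkLink, fun i hi => (hcover i hi).1,
    fun i hi v hv => (hlink i hi v hv).2.2⟩
  case source =>
    intro i _ v hv
    exact (flowPotential_add_self_of_mem (Finset.mem_inter.mp hv).2).ge
  case sourceLink =>
    intro i hi v hv
    obtain ⟨hv, hvs⟩ := Finset.mem_inter.mp hv
    have := hlink i hi v hv
    constructor <;> linarith [flowPotential_sub_of_mem (y := p.1) (i := i) (j := i + 1) hvs]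
  case edge =>
    intro i hi e he hs ht
    have := (hcover i hi).2 e he
    dsimp only
    linarith [flowPotential_sub_of_mem_of_mem_right (y := p.1) (i := i) hdisj hs ht]
  case sink =>
    intro i _ v hv
    dsimp only
    rw [flowPotential_of_mem_right hdisj (Finset.mem_inter.mp hv).2, sub_self]
  case sinkLink =>
    intro i hi v hv
    obtain ⟨hv, hvt⟩ := Finset.mem_inter.mp hv
    have := hlink i hi v hv
    constructor <;>
      linarith [flowPotential_sub_of_mem_right (y := p.1) (i := i) (j := i + 1) hdisj hvt]

/-- Every feasible solution of the relaxed multistage region `D_k` extends to a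
feasible solution of the multistage dual-flow polyhedron `Q_k`, setting `γ^i_v = 1 - y^i_v` on
`V_s` and `γ^i_v = y^i_v` on `V_t` (note `V_s` and `V_t` are disjoint). -/
theorem regionDk_extends_to_regionQk [DecidableEq α]
    (k : ℕ) (hk : 1 ≤ k) (G : ℕ → FinGraph α) (Vs Vt : Finset α)
    (hdisj : Disjoint Vs Vt)
    (hWF : ∀ i < k, (G i).WF) (hbip : ∀ i < k, (G i).Bipartition Vs Vt)
    (p : MultiStagePt α) (hp : p ∈ regionDk k G) :
    (p, fun i v => if v ∈ Vs then 1 - p.1 i v else p.1 i v) ∈ regionQk k G Vs Vt :=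
  regionDk_extends_to_regionQk_general k G Vs Vt hdisj p hp
end

section
/- For every linear objective c with nonnegative coefficients on all of the variables (y^i), (δ^i), (d^i) (and not involving the γ variables), and every point ((y^i), (δ^i), (d^i), (γ^i)) ∈ Q_k, there exists a point μ' ∈ D_k with c(μ') ≤ c((y^i), (δ^i), (d^i)). -/
open FinGraph

variable {α : Type*}

/-! The potentials `γ` of a point of `Q_k` already determine a vertex cover at every stage:
take `max 0 (1 - γ)` on `V_s` and `max 0 γ` on `V_t`. The first and fourth families of
inequalities of `Q_k` bound this cover by `y`, the edge inequalities `γ_u ≤ γ_v` make it a cover,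
and the coupling inequalities on `γ` bound its stage-to-stage changes by `δ` and `d`. Since the
objective is monotone in `y`, the cover with the original `δ`, `d` is the dominating point. -/

section PotentialCover

variable [DecidableEq α] (Vs Vt : Finset α)

def coverOfPotential (γ : α → ℝ) (v : α) : ℝ :=
  max 0 (max (if v ∈ Vs then 1 - γ v else 0) (if v ∈ Vt then γ v else 0))

variable {Vs Vt}

theorem coverOfPotential_nonneg (γ : α → ℝ) (v : α) : 0 ≤ coverOfPotential Vs Vt γ v :=
  le_max_left _ _

theorem coverOfPotential_le {γ : α → ℝ} {v : α} {y : ℝ} (hy : 0 ≤ y)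
    (hs : v ∈ Vs → 1 ≤ γ v + y) (ht : v ∈ Vt → γ v ≤ y) :
    coverOfPotential Vs Vt γ v ≤ y := by
  refine max_le hy (max_le ?_ ?_) <;> split_ifs with h
  exacts [by linarith [hs h], hy, ht h, hy]

theorem one_le_coverOfPotential_add {γ : α → ℝ} {u v : α} (hu : u ∈ Vs) (hv : v ∈ Vt)
    (huv : γ u ≤ γ v) : 1 ≤ coverOfPotential Vs Vt γ u + coverOfPotential Vs Vt γ v := by
  have hcu : 1 - γ u ≤ coverOfPotential Vs Vt γ u := by
    rw [coverOfPotential, if_pos hu]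
    exact (le_max_left _ _).trans (le_max_right _ _)
  have hcv : γ v ≤ coverOfPotential Vs Vt γ v := by
    rw [coverOfPotential, if_pos hv]
    exact (le_max_right _ _).trans (le_max_right _ _)
  linarith

theorem coverOfPotential_sub_le {γ γ' : α → ℝ} {v : α} {t : ℝ} (ht : 0 ≤ t)
    (hs : v ∈ Vs → γ' v - γ v ≤ t) (htv : v ∈ Vt → γ v - γ' v ≤ t) :
    coverOfPotential Vs Vt γ v - coverOfPotential Vs Vt γ' v ≤ t := by
  refine (max_sub_max_le_max _ _ _ _).trans (max_le (by simpa using ht) ?_)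
  refine (max_sub_max_le_max _ _ _ _).trans (max_le ?_ ?_) <;> split_ifs with h
  exacts [by linarith [hs h], by simpa using ht, htv h, by simpa using ht]

end PotentialCover

theorem objCk_le_objCk_of_fst_le [DecidableEq α] {k : ℕ} {G : ℕ → FinGraph α}
    {cy : ℕ → α → ℝ} (cδ cd : ℕ → α → ℝ) {p p' : MultiStagePt α}
    (hcy : ∀ i < k, ∀ v ∈ (G i).verts, 0 ≤ cy i v)
    (hle : ∀ i < k, ∀ v ∈ (G i).verts, p.1 i v ≤ p'.1 i v) (hdev : p.2 = p'.2) :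
    objCk k G cy cδ cd p ≤ objCk k G cy cδ cd p' := by
  rw [objCk, objCk, hdev]
  gcongr with i hi v hv
  · exact hcy i (Finset.mem_range.mp hi) v hv
  · exact hle i (Finset.mem_range.mp hi) v hv

section CoverPoint

variable [DecidableEq α] {k : ℕ} {G : ℕ → FinGraph α} {Vs Vt : Finset α}
  {q : MultiStagePt α × (ℕ → α → ℝ)}

variable (Vs Vt) in
def coverPoint (q : MultiStagePt α × (ℕ → α → ℝ)) : MultiStagePt α :=
  (fun i => coverOfPotential Vs Vt (q.2 i), q.1.2)

theorem coverPoint_le_of_mem_regionQk (hq : q ∈ regionQk k G Vs Vt) :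
    ∀ i < k, ∀ v ∈ (G i).verts, (coverPoint Vs Vt q).1 i v ≤ q.1.1 i v := by
  obtain ⟨hs, -, -, ht, -, hy, -⟩ := hq
  intro i hi v hv
  exact coverOfPotential_le (hy i hi v hv)
    (fun hvs => hs i hi v (Finset.mem_inter.mpr ⟨hv, hvs⟩))
    (fun hvt => by linarith [ht i hi v (Finset.mem_inter.mpr ⟨hv, hvt⟩)])

theorem coverPoint_mem_regionDk (hedge : ∀ i < k, ∀ e ∈ (G i).edges, e.1 ∈ Vs ∧ e.2 ∈ Vt)
    (hq : q ∈ regionQk k G Vs Vt) : coverPoint Vs Vt q ∈ regionDk k G := by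
  obtain ⟨-, hcs, hγ, -, hct, -, hdev⟩ := hq
  refine ⟨fun i hi => ⟨fun v _ => coverOfPotential_nonneg _ v, fun e he => ?_⟩,
    fun i hi v hv => ?_⟩
  · obtain ⟨h1, h2⟩ := hedge i hi e he
    exact one_le_coverOfPotential_add h1 h2 (by linarith [hγ i hi e he h1 h2])
  · dsimp only [coverPoint]
    obtain ⟨hδ, hd⟩ := hdev i hi v hv
    have hs := fun hvs => hcs i hi v (Finset.mem_inter.mpr ⟨hv, hvs⟩)
    have ht := fun hvt => hct i hi v (Finset.mem_inter.mpr ⟨hv, hvt⟩)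
    refine ⟨coverOfPotential_sub_le hδ ?_ ?_, coverOfPotential_sub_le hd ?_ ?_, hδ, hd⟩
    exacts [fun h => by linarith [(hs h).1], fun h => by linarith [(ht h).1],
      fun h => by linarith [(hs h).2], fun h => by linarith [(ht h).2]]

end CoverPoint

theorem regionQk_dominated_by_regionDk_general [DecidableEq α]
    (k : ℕ) (G : ℕ → FinGraph α) (Vs Vt : Finset α)
    (hbip : ∀ i < k, (G i).Bipartition Vs Vt)
    (cy cδ cd : ℕ → α → ℝ)
    (hcy : ∀ i < k, ∀ v ∈ (G i).verts, 0 ≤ cy i v)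
    (q : MultiStagePt α × (ℕ → α → ℝ)) (hq : q ∈ regionQk k G Vs Vt) :
    ∃ p ∈ regionDk k G, objCk k G cy cδ cd p ≤ objCk k G cy cδ cd q.1 :=
  ⟨coverPoint Vs Vt q, coverPoint_mem_regionDk (fun i hi => (hbip i hi).2) hq,
    objCk_le_objCk_of_fst_le cδ cd hcy (coverPoint_le_of_mem_regionQk hq) rfl⟩

/-- For every linear objective `c` with nonnegative coefficients on the
variables `(y^i, δ^i, d^i)` (and not involving the `γ` variables), every point of the multistage
dual-flow polyhedron `Q_k` is dominated by a point of `D_k`: there is `μ' ∈ D_k` whose objective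
value is at most that of the `(y^i, δ^i, d^i)`-part of the given point of `Q_k`. -/
theorem regionQk_dominated_by_regionDk [DecidableEq α]
    (k : ℕ) (hk : 1 ≤ k) (G : ℕ → FinGraph α) (Vs Vt : Finset α)
    (hdisj : Disjoint Vs Vt)
    (hWF : ∀ i < k, (G i).WF) (hbip : ∀ i < k, (G i).Bipartition Vs Vt)
    (cy cδ cd : ℕ → α → ℝ)
    (hcy : ∀ i < k, ∀ v ∈ (G i).verts, 0 ≤ cy i v)
    (hcδ : ∀ i, i + 1 < k → ∀ v ∈ (G i).verts ∩ (G (i + 1)).verts, 0 ≤ cδ i v)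
    (hcd : ∀ i, i + 1 < k → ∀ v ∈ (G i).verts ∩ (G (i + 1)).verts, 0 ≤ cd i v)
    (q : MultiStagePt α × (ℕ → α → ℝ)) (hq : q ∈ regionQk k G Vs Vt) :
    ∃ p ∈ regionDk k G, objCk k G cy cδ cd p ≤ objCk k G cy cδ cd q.1 :=
  regionQk_dominated_by_regionDk_general k G Vs Vt hbip cy cδ cd hcy q hq
end

section
/- For every linear objective c with nonnegative coefficients on all of the variables (y^i), (δ^i), (d^i) (and not involving the γ variables), the infimum of c over the region D_k equals the infimum of c over the polyhedron Q_k; in particular, from an optimal solution of the LP min{c over Q_k} one obtains an optimal solution of the LP min{c over D_k}. -/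
open FinGraph

variable {α : Type*}

/-
Substituting `s^i_v = 1 - γ^i_v` on `V_s` and `s^i_v = γ^i_v` on `V_t` turns `Q_k` into the set of
`(y, δ, d, s)` with `y ≥ 0`, `s ≤ y`, and `s` satisfying the cover and deviation constraints of
`D_k` but not necessarily `s ≥ 0`. Taking `s = y` embeds `D_k` into `Q_k` without changing the
objective. Conversely, `max(0, s)` still satisfies those constraints, so it lies in `D_k`, and it
lies below `y`, so nonnegative costs make it no more expensive. Hence every objective value on
either side is dominated by one on the other, and the infima agree.
-/

theorem FinGraph.Bipartition.mem_right_of_notMem_left [DecidableEq α] {G : FinGraph α}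
    {V1 V2 : Finset α} (h : G.Bipartition V1 V2) {v : α} (hv : v ∈ G.verts) (hv1 : v ∉ V1) :
    v ∈ V2 :=
  (Finset.mem_union.mp (h.1 hv)).resolve_left hv1

theorem max_zero_sub_max_zero_le {a b c : ℝ} (h : a - b ≤ c) (hc : 0 ≤ c) :
    max 0 a - max 0 b ≤ c :=
  (max_sub_max_le_max 0 a 0 b).trans (max_le (by rwa [sub_self]) h)

section

variable [DecidableEq α] {k : ℕ} {G : ℕ → FinGraph α} {Vs Vt : Finset α}
  {q : MultiStagePt α × (ℕ → α → ℝ)}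

/-- Sends `γ` to the `s` of the proof idea, and `y` to the potential of its lift to `Q_k`. -/
def reflectOn (S : Finset α) (f : ℕ → α → ℝ) (i : ℕ) (v : α) : ℝ :=
  if v ∈ S then 1 - f i v else f i v

theorem mk_reflectOn_mem_regionQk (hdisj : Disjoint Vs Vt) {p : MultiStagePt α}
    (hp : p ∈ regionDk k G) : (p, reflectOn Vs p.1) ∈ regionQk k G Vs Vt := by
  obtain ⟨hcover, hdev⟩ := hp
  have hVt : ∀ {v}, v ∈ Vt → v ∉ Vs := fun hv => Finset.disjoint_right.mp hdisj hv
  refine ⟨?_, ?_, ?_, ?_, ?_, fun i hi => (hcover i hi).1, fun i hi v hv => (hdev i hi v hv).2.2⟩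
  · intro i _ v hv
    simp [reflectOn, (Finset.mem_inter.mp hv).2]
  · intro i hi v hv
    rw [Finset.mem_inter] at hv
    have := hdev i hi v hv.1
    simp only [reflectOn, hv.2, if_true]
    constructor <;> linarith
  · intro i hi e he he1 he2
    have := (hcover i hi).2 e he
    simp only [reflectOn, he1, hVt he2, if_true, if_false]
    linarith
  · intro i _ v hv
    simp [reflectOn, hVt (Finset.mem_inter.mp hv).2]
  · intro i hi v hv
    rw [Finset.mem_inter] at hv
    have := hdev i hi v hv.1
    simp only [reflectOn, hVt hv.2, if_false]
    constructor <;> linarith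

theorem max_zero_mem_regionDk {s δ d : ℕ → α → ℝ}
    (hcover : ∀ i < k, ∀ e ∈ (G i).edges, 1 ≤ s i e.1 + s i e.2)
    (hdev : ∀ i, i + 1 < k → ∀ v ∈ (G i).verts ∩ (G (i + 1)).verts,
      s i v - s (i + 1) v ≤ δ i v ∧ s (i + 1) v - s i v ≤ d i v ∧ 0 ≤ δ i v ∧ 0 ≤ d i v) :
    ((fun i v => max 0 (s i v)), δ, d) ∈ regionDk k G := by
  refine ⟨fun i hi => ⟨fun v _ => le_max_left _ _, fun e he => ?_⟩, fun i hi v hv => ?_⟩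
  · have := hcover i hi e he
    linarith [le_max_right 0 (s i e.1), le_max_right 0 (s i e.2)]
  · obtain ⟨hδ, hd, hδ0, hd0⟩ := hdev i hi v hv
    exact ⟨max_zero_sub_max_zero_le hδ hδ0, max_zero_sub_max_zero_le hd hd0, hδ0, hd0⟩

theorem reflectOn_le_of_mem_regionQk (hbip : ∀ i < k, (G i).Bipartition Vs Vt)
    (hq : q ∈ regionQk k G Vs Vt) :
    ∀ i < k, ∀ v ∈ (G i).verts, reflectOn Vs q.2 i v ≤ q.1.1 i v := by
  intro i hi v hv
  by_cases hvs : v ∈ Vs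
  · have := hq.1 i hi v (Finset.mem_inter.mpr ⟨hv, hvs⟩)
    simp only [reflectOn, hvs, if_true]
    linarith
  · have hvt := (hbip i hi).mem_right_of_notMem_left hv hvs
    have := hq.2.2.2.1 i hi v (Finset.mem_inter.mpr ⟨hv, hvt⟩)
    simp only [reflectOn, hvs, if_false]
    linarith

theorem reflectOn_cover_of_mem_regionQk (hdisj : Disjoint Vs Vt)
    (hbip : ∀ i < k, (G i).Bipartition Vs Vt) (hq : q ∈ regionQk k G Vs Vt) :
    ∀ i < k, ∀ e ∈ (G i).edges, 1 ≤ reflectOn Vs q.2 i e.1 + reflectOn Vs q.2 i e.2 := by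
  intro i hi e he
  obtain ⟨he1, he2⟩ := (hbip i hi).2 e he
  have := hq.2.2.1 i hi e he he1 he2
  simp only [reflectOn, he1, Finset.disjoint_right.mp hdisj he2, if_true, if_false]
  linarith

theorem reflectOn_deviation_of_mem_regionQk (hbip : ∀ i < k, (G i).Bipartition Vs Vt)
    (hq : q ∈ regionQk k G Vs Vt) :
    ∀ i, i + 1 < k → ∀ v ∈ (G i).verts ∩ (G (i + 1)).verts,
      reflectOn Vs q.2 i v - reflectOn Vs q.2 (i + 1) v ≤ q.1.2.1 i v ∧
      reflectOn Vs q.2 (i + 1) v - reflectOn Vs q.2 i v ≤ q.1.2.2 i v ∧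
      0 ≤ q.1.2.1 i v ∧ 0 ≤ q.1.2.2 i v := by
  intro i hi v hv
  rw [← and_assoc]
  refine ⟨?_, hq.2.2.2.2.2.2 i hi v hv⟩
  by_cases hvs : v ∈ Vs
  · have := hq.2.1 i hi v (Finset.mem_inter.mpr ⟨hv, hvs⟩)
    simp only [reflectOn, hvs, if_true]
    constructor <;> linarith
  · have hvt := (hbip i (by omega)).mem_right_of_notMem_left (Finset.mem_inter.mp hv).1 hvs
    have := hq.2.2.2.2.1 i hi v (Finset.mem_inter.mpr ⟨hv, hvt⟩)
    simp only [reflectOn, hvs, if_false]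
    constructor <;> linarith

theorem objCk_le_objCk {cy cδ cd : ℕ → α → ℝ} (hcy : ∀ i < k, ∀ v ∈ (G i).verts, 0 ≤ cy i v)
    {y y' δ d : ℕ → α → ℝ} (hy : ∀ i < k, ∀ v ∈ (G i).verts, y i v ≤ y' i v) :
    objCk k G cy cδ cd (y, δ, d) ≤ objCk k G cy cδ cd (y', δ, d) := by
  refine add_le_add_left (Finset.sum_le_sum fun i hi => Finset.sum_le_sum fun v hv => ?_) _
  rw [Finset.mem_range] at hi
  exact mul_le_mul_of_nonneg_left (hy i hi v hv) (hcy i hi v hv)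

theorem exists_objCk_le_of_mem_regionQk (hdisj : Disjoint Vs Vt)
    (hbip : ∀ i < k, (G i).Bipartition Vs Vt) {cy cδ cd : ℕ → α → ℝ}
    (hcy : ∀ i < k, ∀ v ∈ (G i).verts, 0 ≤ cy i v) (hq : q ∈ regionQk k G Vs Vt) :
    ∃ p ∈ regionDk k G, objCk k G cy cδ cd p ≤ objCk k G cy cδ cd q.1 :=
  ⟨_, max_zero_mem_regionDk (reflectOn_cover_of_mem_regionQk hdisj hbip hq)
      (reflectOn_deviation_of_mem_regionQk hbip hq),
    objCk_le_objCk hcy fun i hi v hv =>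
      max_le (hq.2.2.2.2.2.1 i hi v hv) (reflectOn_le_of_mem_regionQk hbip hq i hi v hv)⟩

end

theorem sInf_objCk_regionDk_eq_regionQk_general [DecidableEq α]
    (k : ℕ) (G : ℕ → FinGraph α) (Vs Vt : Finset α)
    (hdisj : Disjoint Vs Vt)
    (hbip : ∀ i < k, (G i).Bipartition Vs Vt)
    (cy cδ cd : ℕ → α → ℝ)
    (hcy : ∀ i < k, ∀ v ∈ (G i).verts, 0 ≤ cy i v) :
    sInf (objCk k G cy cδ cd '' regionDk k G) =
      sInf ((fun q => objCk k G cy cδ cd q.1) '' regionQk k G Vs Vt) := by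
  apply csInf_eq_csInf_of_forall_exists_le
  · rintro _ ⟨p, hp, rfl⟩
    exact ⟨_, ⟨_, mk_reflectOn_mem_regionQk hdisj hp, rfl⟩, le_rfl⟩
  · rintro _ ⟨q, hq, rfl⟩
    obtain ⟨p, hp, hle⟩ := exists_objCk_le_of_mem_regionQk hdisj hbip hcy hq
    exact ⟨_, ⟨p, hp, rfl⟩, hle⟩

/-- For every linear objective `c` with nonnegative coefficients on the
variables `(y^i, δ^i, d^i)` (and not involving the `γ` variables), the infimum of `c` over the
region `D_k` equals the infimum of `c` over the multistage dual-flow polyhedron `Q_k`. -/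
theorem sInf_objCk_regionDk_eq_regionQk [DecidableEq α]
    (k : ℕ) (hk : 1 ≤ k) (G : ℕ → FinGraph α) (Vs Vt : Finset α)
    (hdisj : Disjoint Vs Vt)
    (hWF : ∀ i < k, (G i).WF) (hbip : ∀ i < k, (G i).Bipartition Vs Vt)
    (cy cδ cd : ℕ → α → ℝ)
    (hcy : ∀ i < k, ∀ v ∈ (G i).verts, 0 ≤ cy i v)
    (hcδ : ∀ i, i + 1 < k → ∀ v ∈ (G i).verts ∩ (G (i + 1)).verts, 0 ≤ cδ i v)
    (hcd : ∀ i, i + 1 < k → ∀ v ∈ (G i).verts ∩ (G (i + 1)).verts, 0 ≤ cd i v) :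
    sInf (objCk k G cy cδ cd '' regionDk k G) =
      sInf ((fun q => objCk k G cy cδ cd q.1) '' regionQk k G Vs Vt) :=
  sInf_objCk_regionDk_eq_regionQk_general k G Vs Vt hdisj hbip cy cδ cd hcy
end

section
/- Let k ≥ 1 and let G_1,…,G_k be finite bipartite graphs with a common bipartition. Then the minimum of Σ_{i=1}^{k−1} Σ_{v∈V_i∩V_{i+1}} |1_{C_i}(v) − 1_{C_{i+1}}(v)|, taken over all tuples (C_1,…,C_k) where each C_i ⊆ V_i is a minimum vertex cover of G_i (i.e., |C_i| = ν(G_i)), equals the minimum of Σ_{i=1}^{k−1} Σ_{v∈V_i∩V_{i+1}} (δ^i_v + d^i_v) over the LP feasible region P_k; in particular the multistage LP with unit costs admits an integral optimal solution given by minimum vertex covers of the stages. -/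
open FinGraph

variable {α : Type*}

/-- `C` is a vertex cover of the graph `G`. -/
def FinGraph.IsVertexCover (G : FinGraph α) (C : Finset α) : Prop :=
  ∀ e ∈ G.edges, e.1 ∈ C ∨ e.2 ∈ C

/-!
Minimum vertex covers `C_i`, with deviations `(x^i_v - x^{i+1}_v)⁺` and `(x^i_v - x^{i+1}_v)⁻`
for their indicators `x^i`, are LP points of the same value. Conversely, clip an LP point to
`z^i = min 1 y^i` and round every stage with one common threshold `θ`: keep `v ∈ Vs` when
`θ ≤ z^i_v` and `v ∈ Vt` when `1 - z^i_v < θ`. Each rounding is a vertex cover, hence has at least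
`ν(G_i)` vertices; for `θ` uniform on `[0, 1]` its expected size is `Σ_v z^i_v ≤ ν(G_i)` and its
expected switching cost is `Σ_i Σ_v |z^i_v - z^{i+1}_v|`, at most the LP objective. So some `θ`
yields minimum vertex covers at every stage whose switching cost is at most the LP value. Since
only finitely many breakpoints matter, the uniform distribution is replaced by finitely many
weighted thresholds.
-/

open Finset

section ThresholdAverage

theorem sum_range_sub_mul_ite_le {b : ℕ → ℝ} (hb : Monotone b) {n t : ℕ} (ht : t ≤ n) :
    ∑ j ∈ range n, (b (j + 1) - b j) * (if b (j + 1) ≤ b t then 1 else 0) = b t - b 0 := by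
  have below : ∀ j ∈ range t,
      (b (j + 1) - b j) * (if b (j + 1) ≤ b t then 1 else 0) = b (j + 1) - b j := by
    intro j hj
    rw [if_pos (hb (mem_range.1 hj)), mul_one]
  -- above `t` a threshold can only pass `b t` on a plateau of `b`, where the gap vanishes
  have above : ∀ j ∈ Ico t n, (b (j + 1) - b j) * (if b (j + 1) ≤ b t then 1 else 0) = 0 := by
    intro j hj
    split_ifs with h
    · have : b t ≤ b j := hb (mem_Ico.1 hj).1
      have : b j ≤ b (j + 1) := hb j.le_succ
      rw [show b (j + 1) - b j = 0 by linarith, zero_mul]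
    · rw [mul_zero]
  rw [← sum_range_add_sum_Ico _ ht, sum_congr rfl below, sum_eq_zero above, add_zero,
    sum_range_sub]

theorem exists_threshold_weights (A : Finset ℝ) (hA : ∀ a ∈ A, 0 ≤ a ∧ a ≤ 1) :
    ∃ (n : ℕ) (w θ : ℕ → ℝ), (∀ j, 0 ≤ w j) ∧ ∑ j ∈ range n, w j = 1 ∧
      ∀ a ∈ A, ∑ j ∈ range n, w j * (if θ j ≤ a then 1 else 0) = a := by
  set B := insert 0 (insert 1 A)
  have hB : ∀ x ∈ B, 0 ≤ x ∧ x ≤ 1 := by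
    simp only [B, mem_insert, forall_eq_or_imp]
    exact ⟨by norm_num, by norm_num, hA⟩
  obtain ⟨n, hn⟩ : ∃ n, #B = n + 1 := Nat.exists_eq_add_one.2 (card_pos.2 (insert_nonempty _ _))
  set e := B.orderEmbOfFin hn
  set b : ℕ → ℝ := fun j => e ⟨min j n, by omega⟩
  have hb : Monotone b := fun i j h => e.monotone (Fin.mk_le_mk.2 (min_le_min_right n h))
  have hb0 : b 0 = 0 := by
    obtain ⟨t, ht⟩ : (0 : ℝ) ∈ Set.range e := by rw [range_orderEmbOfFin]; exact mem_insert_self _ _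
    exact le_antisymm (ht ▸ e.monotone (Fin.zero_le t)) (hB _ (B.orderEmbOfFin_mem hn _)).1
  have hbn : b n = 1 := by
    obtain ⟨t, ht⟩ : (1 : ℝ) ∈ Set.range e := by
      rw [range_orderEmbOfFin]; exact mem_insert_of_mem (mem_insert_self _ _)
    exact le_antisymm (hB _ (B.orderEmbOfFin_mem hn _)).2
      (ht ▸ e.monotone (Fin.mk_le_mk.2 (by omega)))
  refine ⟨n, fun j => b (j + 1) - b j, fun j => b (j + 1), fun j => sub_nonneg.2 (hb j.le_succ),
    by rw [sum_range_sub, hbn, hb0, sub_zero], fun a ha => ?_⟩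
  obtain ⟨t, rfl⟩ : ∃ t, e t = a := by
    rw [← Set.mem_range, range_orderEmbOfFin]
    exact mem_insert_of_mem (mem_insert_of_mem ha)
  have hbt : b t = e t := by simp only [b, min_eq_left (Nat.lt_succ_iff.1 t.2)]
  rw [← hbt, sum_range_sub_mul_ite_le hb (Nat.lt_succ_iff.1 t.2), hb0, sub_zero]

variable {n : ℕ} {w θ : ℕ → ℝ}

theorem sum_mul_abs_ite_sub_ite {a a' : ℝ}
    (ha : ∑ j ∈ range n, w j * (if θ j ≤ a then 1 else 0) = a)
    (ha' : ∑ j ∈ range n, w j * (if θ j ≤ a' then 1 else 0) = a') :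
    ∑ j ∈ range n, w j * |(if θ j ≤ a then 1 else 0) - (if θ j ≤ a' then 1 else 0)| =
      |a - a'| := by
  have hmax : ∑ j ∈ range n, w j * (if θ j ≤ max a a' then 1 else 0) = max a a' := by
    rcases max_choice a a' with h | h <;> rw [h] <;> assumption
  have hmin : ∑ j ∈ range n, w j * (if θ j ≤ min a a' then 1 else 0) = min a a' := by
    rcases min_choice a a' with h | h <;> rw [h] <;> assumption
  have hstep : ∀ x : ℝ, |(if x ≤ a then (1 : ℝ) else 0) - (if x ≤ a' then 1 else 0)| =
      (if x ≤ max a a' then 1 else 0) - (if x ≤ min a a' then 1 else 0) := by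
    intro x
    simp only [le_max_iff, le_min_iff]
    split_ifs <;> grind
  simp only [hstep, mul_sub, sum_sub_distrib, hmax, hmin, max_sub_min_eq_abs']

theorem exists_pos_and_le_of_sum_mul_le (hw : ∀ j, 0 ≤ w j) (hw1 : ∑ j ∈ range n, w j = 1)
    {f : ℕ → ℝ} {c : ℝ} (h : ∑ j ∈ range n, w j * f j ≤ c) :
    ∃ j ∈ range n, 0 < w j ∧ f j ≤ c := by
  by_contra! hlt
  obtain ⟨j, hj, hwj⟩ : ∃ j ∈ range n, 0 < w j := by
    by_contra! hw0
    have : ∑ j ∈ range n, w j ≤ 0 := sum_nonpos hw0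
    linarith
  have : ∑ j ∈ range n, w j * c < ∑ j ∈ range n, w j * f j :=
    sum_lt_sum (fun i hi => by
      rcases (hw i).lt_or_eq with hpos | hzero
      · exact (mul_lt_mul_of_pos_left (hlt i hi hpos) hpos).le
      · rw [← hzero, zero_mul, zero_mul])
      ⟨j, hj, mul_lt_mul_of_pos_left (hlt j hj hwj) hwj⟩
  rw [← sum_mul, hw1, one_mul] at this
  linarith

theorem eq_of_sum_mul_le_of_le (hw : ∀ j, 0 ≤ w j) (hw1 : ∑ j ∈ range n, w j = 1)
    {f : ℕ → ℝ} {c : ℝ} (hle : ∀ j ∈ range n, c ≤ f j) (h : ∑ j ∈ range n, w j * f j ≤ c)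
    {j : ℕ} (hj : j ∈ range n) (hwj : 0 < w j) : f j = c := by
  have hterm : ∀ i ∈ range n, 0 ≤ w i * (f i - c) :=
    fun i hi => mul_nonneg (hw i) (sub_nonneg.2 (hle i hi))
  have hsum : ∑ i ∈ range n, w i * (f i - c) = 0 := by
    refine le_antisymm ?_ (sum_nonneg hterm)
    simp only [mul_sub, sum_sub_distrib, ← sum_mul, hw1, one_mul]
    linarith
  have := (sum_eq_zero_iff_of_nonneg hterm).1 hsum j hj
  rcases mul_eq_zero.1 this with h0 | h0
  · exact absurd h0 hwj.ne'
  · linarith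

theorem exists_threshold_weights_of_stages {k : ℕ} {V : ℕ → Finset α} {z : ℕ → α → ℝ}
    (hz : ∀ i < k, ∀ v ∈ V i, 0 ≤ z i v ∧ z i v ≤ 1) :
    ∃ (n : ℕ) (w θ : ℕ → ℝ), (∀ j, 0 ≤ w j) ∧ ∑ j ∈ range n, w j = 1 ∧
      ∀ i < k, ∀ v ∈ V i, ∑ j ∈ range n, w j * (if θ j ≤ z i v then 1 else 0) = z i v ∧
        ∑ j ∈ range n, w j * (if θ j ≤ 1 - z i v then 1 else 0) = 1 - z i v := by
  obtain ⟨n, w, θ, hw, hw1, hstep⟩ := exists_threshold_weights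
      ((range k).biUnion fun i => (V i).biUnion fun v => {z i v, 1 - z i v}) (by
    simp only [mem_biUnion, mem_insert, mem_singleton, mem_range]
    rintro a ⟨i, hi, v, hv, rfl | rfl⟩
    · exact hz i hi v hv
    · have := hz i hi v hv
      constructor <;> linarith)
  refine ⟨n, w, θ, hw, hw1, fun i hi v hv => ⟨hstep _ ?_, hstep _ ?_⟩⟩ <;>
    exact mem_biUnion.2 ⟨i, mem_range.2 hi, mem_biUnion.2 ⟨v, hv, by simp⟩⟩

end ThresholdAverage

theorem FinGraph.IsVertexCover.nu_le_card {G : FinGraph α} {C : Finset α}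
    (hC : G.IsVertexCover C) : G.nu ≤ #C := by
  classical
  refine Finset.sup_le fun M hM => ?_
  obtain ⟨hMG, hdisj⟩ := (mem_filter.1 hM).2
  refine card_le_card_of_injOn (fun e => if e.1 ∈ C then e.1 else e.2)
    (fun e he => ?_) (fun e he f hf hef => ?_)
  · simp only [mem_coe]
    split_ifs with h
    · exact h
    · exact (hC e (hMG he)).resolve_left h
  · by_contra hne
    have := hdisj e he f hf hne
    simp only at hef
    split_ifs at hef <;> tauto

theorem sum_ite_mem_eq_card [DecidableEq α] {s t : Finset α} (h : t ⊆ s) :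
    ∑ v ∈ s, (if v ∈ t then (1 : ℝ) else 0) = #t := by
  rw [sum_boole, filter_mem_eq_inter, inter_eq_right.2 h]

namespace FinGraph

variable [DecidableEq α] {G : FinGraph α} {Vs : Finset α} {y : α → ℝ} {v : α}

noncomputable def thresholdCover (G : FinGraph α) (Vs : Finset α) (y : α → ℝ) (θ : ℝ) :
    Finset α :=
  G.verts.filter fun v => if v ∈ Vs then θ ≤ y v else 1 - y v < θ

theorem thresholdCover_subset (θ : ℝ) : G.thresholdCover Vs y θ ⊆ G.verts := filter_subset _ _

theorem isVertexCover_thresholdCover {Vt : Finset α} (hdisj : Disjoint Vs Vt) (hWF : G.WF)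
    (hbip : G.Bipartition Vs Vt) (hy : ∀ e ∈ G.edges, 1 ≤ y e.1 + y e.2) (θ : ℝ) :
    G.IsVertexCover (G.thresholdCover Vs y θ) := by
  intro e he
  obtain ⟨h1, h2, -⟩ := hWF e he
  obtain ⟨h1s, h2t⟩ := hbip.2 e he
  have h2s : e.2 ∉ Vs := disjoint_right.1 hdisj h2t
  by_cases hθ : θ ≤ y e.1
  · exact Or.inl (mem_filter.2 ⟨h1, by rwa [if_pos h1s]⟩)
  · exact Or.inr (mem_filter.2 ⟨h2, by rw [if_neg h2s]; linarith [hy e he]⟩)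

theorem ite_mem_thresholdCover (hv : v ∈ G.verts) (θ : ℝ) :
    (if v ∈ G.thresholdCover Vs y θ then (1 : ℝ) else 0) =
      if v ∈ Vs then (if θ ≤ y v then 1 else 0) else 1 - if θ ≤ 1 - y v then 1 else 0 := by
  by_cases hs : v ∈ Vs <;> by_cases hθ : θ ≤ 1 - y v <;>
    simp [thresholdCover, hv, hs, hθ]

variable {n : ℕ} {w θ : ℕ → ℝ}

theorem sum_mul_ite_mem_thresholdCover (hw1 : ∑ j ∈ range n, w j = 1)
    (hy : ∑ j ∈ range n, w j * (if θ j ≤ y v then 1 else 0) = y v)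
    (hy' : ∑ j ∈ range n, w j * (if θ j ≤ 1 - y v then 1 else 0) = 1 - y v)
    (hv : v ∈ G.verts) :
    ∑ j ∈ range n, w j * (if v ∈ G.thresholdCover Vs y (θ j) then 1 else 0) = y v := by
  simp only [ite_mem_thresholdCover hv]
  split_ifs
  · exact hy
  · simp only [mul_sub, mul_one, sum_sub_distrib, hw1, hy', sub_sub_cancel]

theorem sum_mul_abs_ite_mem_thresholdCover_sub {G' : FinGraph α} {y' : α → ℝ}
    (hy₁ : ∑ j ∈ range n, w j * (if θ j ≤ y v then 1 else 0) = y v)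
    (hy₂ : ∑ j ∈ range n, w j * (if θ j ≤ 1 - y v then 1 else 0) = 1 - y v)
    (hy'₁ : ∑ j ∈ range n, w j * (if θ j ≤ y' v then 1 else 0) = y' v)
    (hy'₂ : ∑ j ∈ range n, w j * (if θ j ≤ 1 - y' v then 1 else 0) = 1 - y' v)
    (hv : v ∈ G.verts) (hv' : v ∈ G'.verts) :
    ∑ j ∈ range n, w j * |(if v ∈ G.thresholdCover Vs y (θ j) then 1 else 0) -
      (if v ∈ G'.thresholdCover Vs y' (θ j) then 1 else 0)| = |y v - y' v| := by
  simp only [ite_mem_thresholdCover hv, ite_mem_thresholdCover hv']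
  split_ifs
  · exact sum_mul_abs_ite_sub_ite hy₁ hy'₁
  · simp only [sub_sub_sub_cancel_left, abs_sub_comm (if θ _ ≤ 1 - y' v then (1 : ℝ) else 0)]
    rw [sum_mul_abs_ite_sub_ite hy₂ hy'₂, sub_sub_sub_cancel_left, abs_sub_comm]

end FinGraph

section Multistage

variable [DecidableEq α] {k : ℕ} {G : ℕ → FinGraph α}

def switchCost (k : ℕ) (G : ℕ → FinGraph α) (x : ℕ → α → ℝ) : ℝ :=
  ∑ i ∈ range (k - 1), ∑ v ∈ (G i).verts ∩ (G (i + 1)).verts, |x i v - x (i + 1) v|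

theorem switchCost_min_one_le (x : ℕ → α → ℝ) :
    switchCost k G (fun i v => min 1 (x i v)) ≤ switchCost k G x :=
  sum_le_sum fun _ _ => sum_le_sum fun _ _ =>
    (abs_min_sub_min_le_max _ _ _ _).trans (by simp)

theorem switchCost_le_of_mem_regionDk {p : MultiStagePt α} (hp : p ∈ regionDk k G) :
    switchCost k G p.1 ≤ ∑ i ∈ range (k - 1), ∑ v ∈ (G i).verts ∩ (G (i + 1)).verts,
      (p.2.1 i v + p.2.2 i v) := by
  refine sum_le_sum fun i hi => sum_le_sum fun v hv => ?_
  obtain ⟨hδ, hd, hδ0, hd0⟩ := hp.2 i (by rw [mem_range] at hi; omega) v hv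
  exact abs_sub_le_iff.2 ⟨by linarith, by linarith⟩

def minimalDeviationPt (x : ℕ → α → ℝ) : MultiStagePt α :=
  (x, fun i v => (x i v - x (i + 1) v)⁺, fun i v => (x i v - x (i + 1) v)⁻)

theorem sum_deviation_minimalDeviationPt (x : ℕ → α → ℝ) :
    ∑ i ∈ range (k - 1), ∑ v ∈ (G i).verts ∩ (G (i + 1)).verts,
      ((minimalDeviationPt x).2.1 i v + (minimalDeviationPt x).2.2 i v) = switchCost k G x :=
  sum_congr rfl fun _ _ => sum_congr rfl fun _ _ => posPart_add_negPart _

theorem minimalDeviationPt_mem_regionPk {x : ℕ → α → ℝ}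
    (hx0 : ∀ i < k, ∀ v ∈ (G i).verts, 0 ≤ x i v)
    (hxcov : ∀ i < k, ∀ e ∈ (G i).edges, 1 ≤ x i e.1 + x i e.2)
    (hxsum : ∀ i < k, ∑ v ∈ (G i).verts, x i v = (G i).nu) :
    minimalDeviationPt x ∈ regionPk k G :=
  ⟨⟨fun i hi => ⟨hx0 i hi, hxcov i hi⟩, fun _ _ _ _ =>
    ⟨le_posPart _, by rw [← neg_sub]; exact neg_le_negPart _, posPart_nonneg _,
      negPart_nonneg _⟩⟩, hxsum⟩

theorem minimalDeviationPt_indicator_mem_regionPk {C : ℕ → Finset α}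
    (hC : ∀ i < k, C i ⊆ (G i).verts ∧ (G i).IsVertexCover (C i) ∧ #(C i) = (G i).nu) :
    minimalDeviationPt (fun i v => if v ∈ C i then 1 else 0) ∈ regionPk k G := by
  refine minimalDeviationPt_mem_regionPk (fun _ _ _ _ => by positivity) (fun i hi e he => ?_)
    (fun i hi => by rw [sum_ite_mem_eq_card (hC i hi).1, (hC i hi).2.2])
  rcases (hC i hi).2.1 e he with h | h <;> split_ifs <;> norm_num

theorem exists_minVertexCovers_switchCost_le {Vs Vt : Finset α} (hdisj : Disjoint Vs Vt)
    (hWF : ∀ i < k, (G i).WF) (hbip : ∀ i < k, (G i).Bipartition Vs Vt) {z : ℕ → α → ℝ}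
    (hz : ∀ i < k, ∀ v ∈ (G i).verts, 0 ≤ z i v ∧ z i v ≤ 1)
    (hcov : ∀ i < k, ∀ e ∈ (G i).edges, 1 ≤ z i e.1 + z i e.2)
    (hsum : ∀ i < k, ∑ v ∈ (G i).verts, z i v ≤ (G i).nu) :
    ∃ C : ℕ → Finset α,
      (∀ i < k, C i ⊆ (G i).verts ∧ (G i).IsVertexCover (C i) ∧ #(C i) = (G i).nu) ∧
      switchCost k G (fun i v => if v ∈ C i then 1 else 0) ≤ switchCost k G z := by
  obtain ⟨n, w, θ, hw, hw1, hstep⟩ := exists_threshold_weights_of_stages hz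
  set C : ℕ → ℕ → Finset α := fun j i => (G i).thresholdCover Vs (z i) (θ j)
  have hcover : ∀ j, ∀ i < k, (G i).IsVertexCover (C j i) := fun j i hi =>
    isVertexCover_thresholdCover hdisj (hWF i hi) (hbip i hi) (hcov i hi) _
  have hcard : ∀ i < k, ∑ j ∈ range n, w j * #(C j i) ≤ (G i).nu := by
    intro i hi
    calc ∑ j ∈ range n, w j * #(C j i)
        = ∑ j ∈ range n, ∑ v ∈ (G i).verts, w j * (if v ∈ C j i then 1 else 0) :=
          sum_congr rfl fun j _ => by rw [← mul_sum, sum_ite_mem_eq_card (thresholdCover_subset _)]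
      _ = ∑ v ∈ (G i).verts, ∑ j ∈ range n, w j * (if v ∈ C j i then 1 else 0) := sum_comm
      _ = ∑ v ∈ (G i).verts, z i v := sum_congr rfl fun v hv =>
          sum_mul_ite_mem_thresholdCover hw1 (hstep i hi v hv).1 (hstep i hi v hv).2 hv
      _ ≤ (G i).nu := hsum i hi
  have hswitch : ∑ j ∈ range n, w j * switchCost k G (fun i v => if v ∈ C j i then 1 else 0) =
      switchCost k G z := by
    simp only [switchCost, mul_sum]
    rw [sum_comm]
    refine sum_congr rfl fun i hi => ?_
    rw [sum_comm]
    refine sum_congr rfl fun v hv => ?_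
    have hi' : i + 1 < k := by rw [mem_range] at hi; omega
    obtain ⟨hv₁, hv₂⟩ := mem_inter.1 hv
    exact sum_mul_abs_ite_mem_thresholdCover_sub (hstep i (by omega) v hv₁).1
      (hstep i (by omega) v hv₁).2 (hstep _ hi' v hv₂).1 (hstep _ hi' v hv₂).2 hv₁ hv₂
  obtain ⟨j, hj, hwj, hle⟩ := exists_pos_and_le_of_sum_mul_le hw hw1 hswitch.le
  refine ⟨C j, fun i hi => ⟨thresholdCover_subset _, hcover j i hi, ?_⟩, hle⟩
  exact_mod_cast eq_of_sum_mul_le_of_le hw hw1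
    (fun j _ => by exact_mod_cast (hcover j i hi).nu_le_card) (hcard i hi) hj hwj

theorem exists_minVertexCovers_le_of_mem_regionPk {Vs Vt : Finset α} (hdisj : Disjoint Vs Vt)
    (hWF : ∀ i < k, (G i).WF) (hbip : ∀ i < k, (G i).Bipartition Vs Vt)
    {p : MultiStagePt α} (hp : p ∈ regionPk k G) :
    ∃ C : ℕ → Finset α,
      (∀ i < k, C i ⊆ (G i).verts ∧ (G i).IsVertexCover (C i) ∧ #(C i) = (G i).nu) ∧
      switchCost k G (fun i v => if v ∈ C i then 1 else 0) ≤
        ∑ i ∈ range (k - 1), ∑ v ∈ (G i).verts ∩ (G (i + 1)).verts, (p.2.1 i v + p.2.2 i v) := by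
  have hy0 := fun i hi => (hp.1.1 i hi).1
  obtain ⟨C, hC, hle⟩ := exists_minVertexCovers_switchCost_le hdisj hWF hbip
    (z := fun i v => min 1 (p.1 i v))
    (fun i hi v hv => ⟨le_min zero_le_one (hy0 i hi v hv), min_le_left _ _⟩)
    (fun i hi e he => by
      have h₁ := hy0 i hi _ (hWF i hi e he).1
      have h₂ := hy0 i hi _ (hWF i hi e he).2.1
      have := (hp.1.1 i hi).2 e he
      simp only [min_def]
      split_ifs <;> linarith)
    (fun i hi => hp.2 i hi ▸ sum_le_sum fun v _ => min_le_right _ _)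
  exact ⟨C, hC, hle.trans ((switchCost_min_one_le _).trans (switchCost_le_of_mem_regionDk hp.1))⟩

end Multistage

theorem multistage_vertexCover_eq_LP_general [DecidableEq α]
    (k : ℕ) (G : ℕ → FinGraph α) (Vs Vt : Finset α)
    (hdisj : Disjoint Vs Vt)
    (hWF : ∀ i < k, (G i).WF) (hbip : ∀ i < k, (G i).Bipartition Vs Vt) :
    sInf ((fun C : ℕ → Finset α =>
        ∑ i ∈ Finset.range (k - 1), ∑ v ∈ (G i).verts ∩ (G (i + 1)).verts,
          |(if v ∈ C i then (1 : ℝ) else 0) - (if v ∈ C (i + 1) then (1 : ℝ) else 0)|) ''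
      {C | ∀ i < k, C i ⊆ (G i).verts ∧ (G i).IsVertexCover (C i) ∧ (C i).card = (G i).nu})
    = sInf ((fun p : MultiStagePt α =>
        ∑ i ∈ Finset.range (k - 1), ∑ v ∈ (G i).verts ∩ (G (i + 1)).verts,
          (p.2.1 i v + p.2.2 i v)) '' regionPk k G) := by
  refine csInf_eq_csInf_of_forall_exists_le ?_ ?_
  · rintro _ ⟨C, hC, rfl⟩
    exact ⟨_, ⟨_, minimalDeviationPt_indicator_mem_regionPk hC, rfl⟩,
      (sum_deviation_minimalDeviationPt _).le⟩
  · rintro _ ⟨p, hp, rfl⟩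
    obtain ⟨C, hC, hle⟩ := exists_minVertexCovers_le_of_mem_regionPk hdisj hWF hbip hp
    exact ⟨_, ⟨C, hC, rfl⟩, hle⟩

/-- For bipartite graphs `G_1, …, G_k` with a common bipartition, the minimum
of `Σ_{i} Σ_{v ∈ V_i ∩ V_{i+1}} |1_{C_i}(v) - 1_{C_{i+1}}(v)|` over all tuples of minimum vertex
covers `C_i` of `G_i` equals the minimum of `Σ_{i} Σ_{v ∈ V_i ∩ V_{i+1}} (δ^i_v + d^i_v)` over
the LP feasible region `P_k`; in particular the multistage LP with unit costs admits an integral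
optimal solution given by minimum vertex covers of the stages. -/
theorem multistage_vertexCover_eq_LP [DecidableEq α]
    (k : ℕ) (hk : 1 ≤ k) (G : ℕ → FinGraph α) (Vs Vt : Finset α)
    (hdisj : Disjoint Vs Vt)
    (hWF : ∀ i < k, (G i).WF) (hbip : ∀ i < k, (G i).Bipartition Vs Vt) :
    sInf ((fun C : ℕ → Finset α =>
        ∑ i ∈ Finset.range (k - 1), ∑ v ∈ (G i).verts ∩ (G (i + 1)).verts,
          |(if v ∈ C i then (1 : ℝ) else 0) - (if v ∈ C (i + 1) then (1 : ℝ) else 0)|) ''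
      {C | ∀ i < k, C i ⊆ (G i).verts ∧ (G i).IsVertexCover (C i) ∧ (C i).card = (G i).nu})
    = sInf ((fun p : MultiStagePt α =>
        ∑ i ∈ Finset.range (k - 1), ∑ v ∈ (G i).verts ∩ (G (i + 1)).verts,
          (p.2.1 i v + p.2.2 i v)) '' regionPk k G) :=
  multistage_vertexCover_eq_LP_general k G Vs Vt hdisj hWF hbip
end
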